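/- arXiv:2403.12218 — 2 statements merged into one kernel-verified Lean document; each statement's English description precedes it below -/
import Mathlib

section
/- Let l be a list of real numbers of length n sorted in nondecreasing order, let f be a natural number with n ≥ 2f + 1, and let m ≤ M be real numbers. If at most f entries of l are strictly greater than M and at most f entries of l are strictly less than m, then every entry l[i] with index f ≤ i ≤ n − 1 − f satisfies m ≤ l[i] ≤ M. (Equivalently: after removing the f largest and f smallest values from a finite collection of real numbers in which at most f values exceed M and at most f values are below m, all remaining values lie in [m, M].) -/
/-!
In a sorted list, an entry below `m` forces every entry up to and including it below `m`, so the
`i`-th entry can lie below `m` only if more than `i` entries do; symmetrically, an `i`-th entry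
above `M` drags the last `n - i` entries above `M`.
-/

namespace List

variable {α : Type*}

theorem Sublist.length_le_length_filter {l₁ l₂ : List α} {p : α → Bool} (h : l₁ <+ l₂)
    (hp : ∀ x ∈ l₁, p x) : l₁.length ≤ (l₂.filter p).length := by
  simpa [filter_eq_self.mpr hp] using (h.filter p).length_le

variable [Preorder α] {l : List α}

theorem Pairwise.le_get_of_mem_take (hl : l.Pairwise (· ≤ ·)) (i : Fin l.length) {x : α}
    (hx : x ∈ l.take (i + 1)) : x ≤ l.get i := by
  obtain ⟨j, hj, rfl⟩ := mem_iff_getElem.mp hx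
  simp only [length_take] at hj
  simpa using hl.rel_get_of_le (a := ⟨j, by omega⟩) (b := i) (Fin.mk_le_mk.mpr (by omega))

theorem Pairwise.get_le_of_mem_drop (hl : l.Pairwise (· ≤ ·)) (i : Fin l.length) {x : α}
    (hx : x ∈ l.drop i) : l.get i ≤ x := by
  obtain ⟨j, hj, rfl⟩ := mem_iff_getElem.mp hx
  simp only [length_drop] at hj
  simpa using hl.rel_get_of_le (a := i) (b := ⟨i + j, by omega⟩) (Fin.mk_le_mk.mpr (by omega))

variable [DecidableLT α]

theorem Pairwise.lt_length_filter_lt (hl : l.Pairwise (· ≤ ·)) (i : Fin l.length) {a : α}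
    (h : l.get i < a) : (i : ℕ) < (l.filter fun x ↦ x < a).length := by
  have hprefix := (take_sublist (i + 1) l).length_le_length_filter (p := fun x ↦ x < a)
    fun x hx ↦ decide_eq_true ((hl.le_get_of_mem_take i hx).trans_lt h)
  rw [length_take] at hprefix
  omega

theorem Pairwise.length_sub_le_length_filter_gt (hl : l.Pairwise (· ≤ ·)) (i : Fin l.length)
    {a : α} (h : a < l.get i) : l.length - i ≤ (l.filter fun x ↦ a < x).length := by
  simpa using (drop_sublist i l).length_le_length_filter (p := fun x ↦ a < x)
    fun x hx ↦ decide_eq_true (h.trans_le (hl.get_le_of_mem_drop i hx))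

end List

theorem msr_trim_safety_general (l : List ℝ) (n f : ℕ) (hn : l.length = n)
    (hsorted : l.Pairwise (· ≤ ·)) (m M : ℝ)
    (habove : (l.filter (fun x => decide (M < x))).length ≤ f)
    (hbelow : (l.filter (fun x => decide (x < m))).length ≤ f) :
    ∀ i : ℕ, f ≤ i → i ≤ n - 1 - f →
      ∀ hi : i < l.length, m ≤ l.get ⟨i, hi⟩ ∧ l.get ⟨i, hi⟩ ≤ M := by
  intro i hfi hinf hi
  constructor
  · by_contra h
    have : i < f := (hsorted.lt_length_filter_lt ⟨i, hi⟩ (not_le.mp h)).trans_le hbelow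
    omega
  · by_contra h
    have : l.length - i ≤ f :=
      (hsorted.length_sub_le_length_filter_gt ⟨i, hi⟩ (not_le.mp h)).trans habove
    omega

/-- MSR trimming safety: if `l` is a nondecreasing list of reals of length
`n ≥ 2f + 1`, at most `f` of its entries are strictly greater than `M`, and at
most `f` of its entries are strictly less than `m` (where `m ≤ M`), then every
entry with index `i` satisfying `f ≤ i ≤ n - 1 - f` lies in `[m, M]`. -/
theorem msr_trim_safety (l : List ℝ) (n f : ℕ) (hn : l.length = n)
    (hsorted : l.Pairwise (· ≤ ·)) (hnf : 2 * f + 1 ≤ n)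
    (m M : ℝ) (hmM : m ≤ M)
    (habove : (l.filter (fun x => decide (M < x))).length ≤ f)
    (hbelow : (l.filter (fun x => decide (x < m))).length ≤ f) :
    ∀ i : ℕ, f ≤ i → i ≤ n - 1 - f →
      ∀ hi : i < l.length, m ≤ l.get ⟨i, hi⟩ ∧ l.get ⟨i, hi⟩ ≤ M :=
  msr_trim_safety_general l n f hn hsorted m M habove hbelow
end

section
/- Let l be a list of real numbers of length n sorted in nondecreasing order, let f be a natural number with n ≥ 2f + 1, let m ≤ M be real numbers with at most f entries of l strictly greater than M and at most f entries strictly less than m, and let w ∈ [m, M]. Let J = {f, f+1, …, n−1−f} be the retained indices and let a₀ and (a_i)_{i∈J} be nonnegative weights summing to 1. Then the MSR update w' = a₀·w + Σ_{i∈J} a_i·l[i] satisfies m ≤ w' ≤ M. -/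
/-!
In a nondecreasing list with at most `f` entries below `m`, every entry from position `f` on is
at least `m`: otherwise the `f + 1` entries up to it would all lie below `m`. Symmetrically every
entry up to position `n - 1 - f` is at most `M`. So the retained values lie in `[m, M]`, as does
`w`, and the update is a convex combination of points of this convex set.
-/

open Finset in
theorem Convex.add_sum_smul_mem {𝕜 E ι : Type*} [Field 𝕜] [LinearOrder 𝕜] [IsStrictOrderedRing 𝕜]
    [AddCommGroup E] [Module 𝕜 E] {S : Set E} (hS : Convex 𝕜 S) {s : Finset ι} {a₀ : 𝕜}
    {a : ι → 𝕜} {w : E} {x : ι → E} (ha₀ : 0 ≤ a₀) (ha : ∀ i ∈ s, 0 ≤ a i)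
    (hsum : a₀ + ∑ i ∈ s, a i = 1) (hw : w ∈ S) (hx : ∀ i ∈ s, x i ∈ S) :
    a₀ • w + ∑ i ∈ s, a i • x i ∈ S := by
  simpa only [sum_insertNone, Option.elim] using
    hS.sum_mem (t := insertNone s) (w := fun o => o.elim a₀ a) (z := fun o => o.elim w x)
      (forall_mem_insertNone.mpr ⟨ha₀, ha⟩)
      (by simpa only [sum_insertNone, Option.elim] using hsum)
      (forall_mem_insertNone.mpr ⟨hw, hx⟩)

namespace List.SortedLE

variable {α : Type*} [LinearOrder α] {l : List α}

theorem le_getElem_of_length_filter_lt_le (hl : l.SortedLE) {m : α} {i : ℕ}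
    (hi : i < l.length) (hcount : (l.filter fun x => decide (x < m)).length ≤ i) :
    m ≤ l[i] := by
  by_contra! hlt
  have hprefix : ∀ x ∈ l.take (i + 1), decide (x < m) := by
    intro x hx
    obtain ⟨j, hj, rfl⟩ := mem_take_iff_getElem.mp hx
    exact decide_eq_true <| (hl.getElem_le_getElem_of_le (by omega)).trans_lt hlt
  have := ((take_sublist (i + 1) l).filter fun x => decide (x < m)).length_le
  rw [filter_eq_self.mpr hprefix, length_take] at this
  omega

theorem getElem_le_of_length_filter_lt_lt (hl : l.SortedLE) {M : α} {i : ℕ}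
    (hi : i < l.length) (hcount : (l.filter fun x => decide (M < x)).length < l.length - i) :
    l[i] ≤ M := by
  by_contra! hlt
  have hsuffix : ∀ x ∈ l.drop i, decide (M < x) := by
    intro x hx
    obtain ⟨j, hj, rfl⟩ := mem_drop_iff_getElem.mp hx
    exact decide_eq_true <| hlt.trans_le (hl.getElem_le_getElem_of_le (by omega))
  have := ((drop_sublist i l).filter fun x => decide (M < x)).length_le
  rw [filter_eq_self.mpr hsuffix, length_drop] at this
  omega

end List.SortedLE

theorem msr_update_safety_general (l : List ℝ) (n f : ℕ) (hn : l.length = n)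
    (hsorted : l.Pairwise (· ≤ ·)) (hnf : 2 * f + 1 ≤ n)
    (m M : ℝ)
    (habove : (l.filter (fun x => decide (M < x))).length ≤ f)
    (hbelow : (l.filter (fun x => decide (x < m))).length ≤ f)
    (w : ℝ) (hw : m ≤ w ∧ w ≤ M)
    (a₀ : ℝ) (a : ℕ → ℝ) (ha₀ : 0 ≤ a₀)
    (ha : ∀ i ∈ Finset.Icc f (n - 1 - f), 0 ≤ a i)
    (hsum : a₀ + ∑ i ∈ Finset.Icc f (n - 1 - f), a i = 1) :
    m ≤ a₀ * w + ∑ i ∈ Finset.Icc f (n - 1 - f), a i * l.getD i 0 ∧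
      a₀ * w + ∑ i ∈ Finset.Icc f (n - 1 - f), a i * l.getD i 0 ≤ M := by
  have hretained : ∀ i ∈ Finset.Icc f (n - 1 - f), l.getD i 0 ∈ Set.Icc m M := by
    intro i hi
    rw [Finset.mem_Icc] at hi
    have hil : i < l.length := by omega
    rw [List.getD_eq_getElem _ _ hil]
    exact ⟨hsorted.sortedLE.le_getElem_of_length_filter_lt_le hil (by omega),
      hsorted.sortedLE.getElem_le_of_length_filter_lt_lt hil (by omega)⟩
  simpa only [smul_eq_mul, Set.mem_Icc] using (convex_Icc m M).add_sum_smul_mem ha₀ ha hsum hw hretained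

/-- One-step safety of the MSR update: let `l` be a nondecreasing list of reals
of length `n ≥ 2f + 1` in which at most `f` entries exceed `M` and at most `f`
entries are below `m` (with `m ≤ M`), and let `w ∈ [m, M]`. If `a₀` together
with weights `a i` over the retained indices `J = {f, …, n - 1 - f}` are
nonnegative and sum to `1`, then the MSR update
`w' = a₀ * w + ∑ i in J, a i * l[i]` satisfies `m ≤ w' ≤ M`. -/
theorem msr_update_safety (l : List ℝ) (n f : ℕ) (hn : l.length = n)
    (hsorted : l.Pairwise (· ≤ ·)) (hnf : 2 * f + 1 ≤ n)
    (m M : ℝ) (hmM : m ≤ M)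
    (habove : (l.filter (fun x => decide (M < x))).length ≤ f)
    (hbelow : (l.filter (fun x => decide (x < m))).length ≤ f)
    (w : ℝ) (hw : m ≤ w ∧ w ≤ M)
    (a₀ : ℝ) (a : ℕ → ℝ) (ha₀ : 0 ≤ a₀)
    (ha : ∀ i ∈ Finset.Icc f (n - 1 - f), 0 ≤ a i)
    (hsum : a₀ + ∑ i ∈ Finset.Icc f (n - 1 - f), a i = 1) :
    m ≤ a₀ * w + ∑ i ∈ Finset.Icc f (n - 1 - f), a i * l.getD i 0 ∧
      a₀ * w + ∑ i ∈ Finset.Icc f (n - 1 - f), a i * l.getD i 0 ≤ M :=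
  msr_update_safety_general l n f hn hsorted hnf m M habove hbelow w hw a₀ a ha₀ ha hsum
end
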